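/- arXiv:math/0207094 — 3 statements merged into one kernel-verified Lean document; each statement's English description precedes it below -/
import Mathlib

section
/- Let A be n×n, B = [B₁; B₂] n×r with B₂ invertible r×r, and N = [[I, -B₁B₂⁻¹],[0, I]]. Write NAN⁻¹ in blocks [[Ā₁₁, Ā₁₂],[Ā₂₁, Ā₂₂]] conformal with the partition (n-r, r). Then for every scalar s, rank [sI_n - A, B] = rank [sI_{n-r} - Ā₁₁, -Ā₁₂] + r. -/
/-!
Multiplying `[sI - A, B]` on the left by `N` and on the right by `diag(N⁻¹, 1)` does not change
its rank and turns it into `[sI - Ā, [0; B₂]]`. Splitting the rows of `sI - Ā` gives the block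
matrix `[[sI - Ā₁₁, -Ā₁₂, 0], [⋆, ⋆, B₂]]`; since `B₂` is invertible, column operations clear the
`⋆` blocks, and the rank of the resulting block-diagonal matrix is `rank [sI - Ā₁₁, -Ā₁₂] + r`.
-/

open Matrix

theorem Submodule.finrank_prod {K V W : Type*} [DivisionRing K] [AddCommGroup V] [Module K V]
    [AddCommGroup W] [Module K W] [FiniteDimensional K V] [FiniteDimensional K W]
    (S : Submodule K V) (T : Submodule K W) :
    Module.finrank K (S.prod T) = Module.finrank K S + Module.finrank K T := by
  have hinj : Function.Injective (S.subtype.prodMap T.subtype) :=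
    Subtype.val_injective.prodMap Subtype.val_injective
  rw [← Module.finrank_prod, ← LinearMap.finrank_range_of_inj hinj, LinearMap.range_prodMap,
    Submodule.range_subtype, Submodule.range_subtype]

namespace Matrix

variable {K : Type*} [Field K]

theorem mulVecLin_fromBlocks_zero_zero {m n p q : Type*} [Fintype n] [Fintype q]
    (A : Matrix m n K) (D : Matrix p q K) :
    (fromBlocks A 0 0 D).mulVecLin =
      (LinearEquiv.sumArrowLequivProdArrow m p K K).symm.toLinearMap ∘ₗ
        A.mulVecLin.prodMap D.mulVecLin ∘ₗ
          (LinearEquiv.sumArrowLequivProdArrow n q K K).toLinearMap := by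
  ext x i
  cases i <;> simp [fromBlocks_mulVec, LinearEquiv.sumArrowLequivProdArrow,
    Equiv.sumArrowEquivProdArrow]

theorem rank_fromBlocks_zero_zero {m n p q : Type*} [Fintype m] [Fintype n] [Fintype p]
    [Fintype q] (A : Matrix m n K) (D : Matrix p q K) :
    (fromBlocks A 0 0 D).rank = A.rank + D.rank := by
  rw [rank, mulVecLin_fromBlocks_zero_zero, LinearMap.range_comp, LinearMap.range_comp,
    LinearEquiv.range, Submodule.map_top, LinearEquiv.finrank_map_eq, LinearMap.range_prodMap,
    Submodule.finrank_prod, rank, rank]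

theorem rank_fromBlocks_zero₁₂_of_isUnit {m n q : Type*} [Fintype m] [Fintype n] [Fintype q]
    [DecidableEq q] (A : Matrix m n K) (C : Matrix q n K) {D : Matrix q q K} (hD : IsUnit D) :
    (fromBlocks A 0 C D).rank = A.rank + Fintype.card q := by
  classical
  have hDdet : IsUnit D.det := (isUnit_iff_isUnit_det D).mp hD
  set E : Matrix (n ⊕ q) (n ⊕ q) K := fromBlocks 1 0 (-(D⁻¹ * C)) D⁻¹
  have hclear : fromBlocks A 0 C D * E = fromBlocks A 0 0 1 := by
    simp [E, fromBlocks_multiply, ← Matrix.mul_assoc, mul_nonsing_inv D hDdet]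
  have hE : IsUnit E.det := by
    simpa [E, det_fromBlocks_zero₁₂] using isUnit_nonsing_inv_det D hDdet
  rw [← rank_mul_eq_left_of_isUnit_det _ _ hE, hclear, rank_fromBlocks_zero_zero, rank_one]

theorem rank_fromCols_fromRows_zero_of_isUnit {n p q : Type*} [Fintype n] [Fintype p]
    [Fintype q] [DecidableEq q] (M : Matrix (p ⊕ q) n K) {D : Matrix q q K} (hD : IsUnit D) :
    (fromCols M (fromRows (0 : Matrix p q K) D)).rank = M.toRows₁.rank + Fintype.card q := by
  rw [← fromRows_toRows M, fromCols_fromRows_eq_fromBlocks, toRows₁_fromRows,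
    rank_fromBlocks_zero₁₂_of_isUnit _ _ hD]

end Matrix

theorem zero_assign_stmt8 (m r : ℕ)
    (A : Matrix (Fin m ⊕ Fin r) (Fin m ⊕ Fin r) ℝ)
    (B₁ : Matrix (Fin m) (Fin r) ℝ) (B₂ : Matrix (Fin r) (Fin r) ℝ)
    (hB₂ : IsUnit B₂)
    (N : Matrix (Fin m ⊕ Fin r) (Fin m ⊕ Fin r) ℝ)
    (hN : N = fromBlocks 1 (-(B₁ * B₂⁻¹)) 0 1) (s : ℝ) :
    (fromCols (s • 1 - A) (fromRows B₁ B₂)).rank =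
      (fromCols (s • (1 : Matrix (Fin m) (Fin m) ℝ) - (N * A * N⁻¹).toBlocks₁₁)
        (-(N * A * N⁻¹).toBlocks₁₂)).rank + r := by
  have hNdet : IsUnit N.det := by simp [hN]
  have hNB : N * fromRows B₁ B₂ = fromRows 0 B₂ := by
    simp [hN, fromBlocks_mul_fromRows, Matrix.mul_assoc,
      nonsing_inv_mul B₂ ((isUnit_iff_isUnit_det B₂).mp hB₂)]
  set P : Matrix ((Fin m ⊕ Fin r) ⊕ Fin r) ((Fin m ⊕ Fin r) ⊕ Fin r) ℝ := fromBlocks N⁻¹ 0 0 1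
  have hP : IsUnit P.det := by
    simpa [P, det_fromBlocks_zero₂₁] using isUnit_nonsing_inv_det N hNdet
  have hconj : N * fromCols (s • 1 - A) (fromRows B₁ B₂) * P
      = fromCols (s • 1 - N * A * N⁻¹) (fromRows 0 B₂) := by
    simp [P, mul_fromCols, fromCols_mul_fromBlocks, hNB, Matrix.mul_sub, Matrix.sub_mul,
      mul_nonsing_inv N hNdet]
  have htop : (s • 1 - N * A * N⁻¹).toRows₁
      = fromCols (s • 1 - (N * A * N⁻¹).toBlocks₁₁) (-(N * A * N⁻¹).toBlocks₁₂) := by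
    ext i (j | j) <;> simp [toBlocks₁₁, toBlocks₁₂, one_apply]
  rw [← rank_mul_eq_right_of_isUnit_det N _ hNdet, ← rank_mul_eq_left_of_isUnit_det _ _ hP,
    hconj, rank_fromCols_fromRows_zero_of_isUnit _ hB₂, htop, Fintype.card_fin]
end

section
/- Let A be n×n, B = [B₁; B₂] n×r with B₂ invertible, and N = [[I, -B₁B₂⁻¹],[0, I]], with NAN⁻¹ = [[Ā₁₁, Ā₁₂],[Ā₂₁, Ā₂₂]]. If the pair (A, B) is controllable in the Hautus sense (rank [sI - A, B] = n for all complex s), then the pair (Ā₁₁, Ā₁₂) is controllable: rank [sI_{n-r} - Ā₁₁, Ā₁₂] = n - r for all complex s. -/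
/-!
A left null vector `v` of `[sI - Ā₁₁, Ā₁₂]`, padded to `x = (v, 0)`, is a left eigenvector of
`Ā = N A N⁻¹` for `s`. Then `y = x N` satisfies `y (sI - A) = x (sI - Ā) N = 0`, and `y B = x (N B) = 0`
because `N B = [0; B₂]`. The Hautus condition for `(A, B)` forces `y = 0`, hence `v = 0`. Over a field,
full row rank is the same as a trivial left null space, which turns both rank conditions into these
statements about null vectors.
-/

open Matrix

namespace Matrix

variable {K : Type*} [Field K] {l o p : Type*}

theorem rank_eq_card_iff_vecMul_eq_zero [Fintype l] [Fintype p] (M : Matrix l p K) :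
    M.rank = Fintype.card l ↔ ∀ v, v ᵥ* M = 0 → v = 0 := by
  refine (?_ : _ ↔ Function.Injective M.vecMul).trans (injective_iff_map_eq_zero M.vecMulLinear)
  rw [vecMul_injective_iff, linearIndependent_iff_card_eq_finrank_span, Set.finrank,
    rank_eq_finrank_span_row, eq_comm]

variable [Fintype l] [Fintype o] [DecidableEq l] [DecidableEq o]

theorem fromBlocks_mul_fromRows_eq_fromRows_zero {B₁ : Matrix l o K} {B₂ : Matrix o o K}
    (hB₂ : IsUnit B₂) :
    (fromBlocks 1 (-(B₁ * B₂⁻¹)) 0 1 : Matrix (l ⊕ o) (l ⊕ o) K) * fromRows B₁ B₂ =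
      fromRows 0 B₂ := by
  rw [fromBlocks_mul_fromRows, Matrix.neg_mul, Matrix.mul_assoc,
    nonsing_inv_mul _ ((isUnit_iff_isUnit_det B₂).mp hB₂)]
  simp

theorem sumElim_zero_vecMul_smul_one_sub {M : Matrix (l ⊕ o) (l ⊕ o) K} {s : K} {v : l → K}
    (h₁₁ : v ᵥ* (s • 1 - M.toBlocks₁₁) = 0) (h₁₂ : v ᵥ* M.toBlocks₁₂ = 0) :
    Sum.elim v 0 ᵥ* (s • 1 - M) = 0 := by
  rw [vecMul_sub, sub_eq_zero, vecMul_smul, vecMul_one] at h₁₁ ⊢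
  rw [← fromBlocks_toBlocks M, vecMul_fromBlocks]
  simp only [Sum.elim_comp_inl, Sum.elim_comp_inr, zero_vecMul, add_zero, ← h₁₁, h₁₂]
  ext (_ | _) <;> simp

theorem eq_zero_of_vecMul_fromCols_toBlocks_conj_eq_zero [Fintype p]
    {A N : Matrix (l ⊕ o) (l ⊕ o) K} {B : Matrix (l ⊕ o) p K} (hN : IsUnit N.det)
    (hNB : (N * B).toRows₁ = 0) {s : K} (hAB : ∀ y, y ᵥ* fromCols (s • 1 - A) B = 0 → y = 0)
    {v : l → K}
    (hv : v ᵥ* fromCols (s • 1 - (N * A * N⁻¹).toBlocks₁₁) (N * A * N⁻¹).toBlocks₁₂ = 0) :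
    v = 0 := by
  rw [vecMul_fromCols, ← Sum.elim_zero_zero, Sum.elim_eq_iff] at hv
  have hx := sumElim_zero_vecMul_smul_one_sub hv.1 hv.2
  have hconj : N * (s • 1 - A) = (s • 1 - N * A * N⁻¹) * N := by
    rw [Matrix.mul_sub, Matrix.sub_mul, nonsing_inv_mul_cancel_right _ _ hN, Matrix.mul_smul,
      Matrix.smul_mul, Matrix.mul_one, Matrix.one_mul]
  have hxA : Sum.elim v 0 ᵥ* N ᵥ* (s • 1 - A) = 0 := by
    rw [vecMul_vecMul, hconj, ← vecMul_vecMul, hx, zero_vecMul]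
  have hxB : Sum.elim v 0 ᵥ* N ᵥ* B = 0 := by
    rw [vecMul_vecMul, ← fromRows_toRows (N * B), hNB, sumElim_vecMul_fromRows]
    simp
  have hxN : Sum.elim v 0 ᵥ* N = 0 ᵥ* N := by
    rw [zero_vecMul]
    exact hAB _ (by rw [vecMul_fromCols, hxA, hxB, Sum.elim_zero_zero])
  have hx0 := vecMul_injective_iff_isUnit.mpr ((isUnit_iff_isUnit_det N).mpr hN) hxN
  rw [← Sum.elim_zero_zero, Sum.elim_eq_iff] at hx0
  exact hx0.1

end Matrix

theorem zero_assign_stmt9 (m r : ℕ)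
    (A : Matrix (Fin m ⊕ Fin r) (Fin m ⊕ Fin r) ℂ)
    (B₁ : Matrix (Fin m) (Fin r) ℂ) (B₂ : Matrix (Fin r) (Fin r) ℂ)
    (hB₂ : IsUnit B₂)
    (N : Matrix (Fin m ⊕ Fin r) (Fin m ⊕ Fin r) ℂ)
    (hN : N = fromBlocks 1 (-(B₁ * B₂⁻¹)) 0 1)
    (hctrb : ∀ s : ℂ, (fromCols (s • 1 - A) (fromRows B₁ B₂)).rank = m + r) :
    ∀ s : ℂ, (fromCols (s • (1 : Matrix (Fin m) (Fin m) ℂ) - (N * A * N⁻¹).toBlocks₁₁)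
      ((N * A * N⁻¹).toBlocks₁₂)).rank = m := by
  intro s
  have hNdet : IsUnit N.det := by
    rw [hN, det_fromBlocks_zero₂₁]
    simp
  have hNB : (N * fromRows B₁ B₂).toRows₁ = 0 := by
    rw [hN, fromBlocks_mul_fromRows_eq_fromRows_zero hB₂, toRows₁_fromRows]
  have hAB := (rank_eq_card_iff_vecMul_eq_zero _).mp ((hctrb s).trans (by simp))
  simpa using (rank_eq_card_iff_vecMul_eq_zero _).mpr fun v hv ↦
    eq_zero_of_vecMul_fromCols_toBlocks_conj_eq_zero hNdet hNB hAB hv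
end

section
/- Let A be n×n and B n×r over ℂ with (A, B) controllable (Hautus criterion) and rank B = r, with r < n. Then for every monic polynomial ψ_a of degree n - r whose roots are disjoint from the spectrum of A, there exists an r×n matrix H of rank r such that det [[sI - A, -B],[H, 0]] = c·ψ_a(s) for some nonzero constant c, i.e., the square system (A, B, H) has exactly the invariant zeros prescribed by ψ_a. -/
/-!
Let `λ₁, …, λₘ` (`m = n - r`) be the roots of `ψ`. It suffices to find `W` whose columns,
together with those of `B`, form a basis, and `L` with characteristic polynomial `ψ`, such that
`A W ≡ W L` modulo the range of `B`: then the rows `H` of `[W | B]⁻¹` belonging to `B` satisfy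
`H W = 0` and `H B = 1`, and a block elimination gives `det P(s) = det (s - L) = ψ(s)`.

`W` and `L` are built one root at a time, `L` staying block upper triangular. If `Z ⊇ range B`
is a proper subspace and `λ` is not an eigenvalue of `A`, some `x ∉ Z` has `(λ - A) x ∈ Z`:
otherwise `(λ - A)⁻¹` would map `Z` into itself, so `Z` would be a proper `A`-invariant subspace
containing `range B`, and the Hautus condition fails at an eigenvalue of `A` acting on the
quotient by `Z`.
-/

open Matrix Polynomial

section BlockMatrices

variable {R ι κ ρ : Type*} [CommRing R]

theorem Matrix.linearIndependent_col_fromCols_replicateCol {K : Type*} [DivisionRing K]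
    {W : Matrix ι κ K} {B : Matrix ι ρ K} {x : ι → K} (h : LinearIndependent K (fromCols W B).col)
    (hx : x ∉ Submodule.span K (Set.range (fromCols W B).col)) :
    LinearIndependent K (fromCols (fromCols W (replicateCol Unit x)) B).col := by
  let f : (κ ⊕ Unit) ⊕ ρ → Option (κ ⊕ ρ) :=
    Sum.elim (Sum.elim (some ∘ Sum.inl) fun _ => none) (some ∘ Sum.inr)
  have hf : Function.Injective f := by
    rintro ((j | ⟨⟩) | i) ((j' | ⟨⟩) | i') h <;> simp_all [f]
  have hcol : (fromCols (fromCols W (replicateCol Unit x)) B).col =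
      (fun o => Option.casesOn' o x (fromCols W B).col) ∘ f := by
    ext ((j | ⟨⟩) | i) <;> rfl
  exact hcol ▸ (h.option hx).comp f hf

theorem Matrix.mul_submatrix_id [Fintype ι] {ν μ : Type*} (M : Matrix ρ ι R) (N : Matrix ι ν R)
    (f : μ → ν) : M * N.submatrix id f = submatrix (M * N) id f := by
  rw [submatrix_mul M N id id f Function.bijective_id, submatrix_id_id]

theorem Matrix.det_submatrix_mul [Fintype ι] [DecidableEq ι] [Fintype κ] [DecidableEq κ]
    (M : Matrix ι κ R) (F : Matrix κ κ R) (e : κ ≃ ι) :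
    (submatrix (M * F) id e.symm).det = (M.submatrix id e.symm).det * F.det := by
  rw [← submatrix_mul_equiv M F id e.symm e.symm, det_mul, det_submatrix_equiv_self]

theorem Matrix.isUnit_det_submatrix_fromCols_neg [Fintype ι] [DecidableEq ι] [Fintype κ]
    [DecidableEq κ] [Fintype ρ] [DecidableEq ρ] {W : Matrix ι κ R} {B : Matrix ι ρ R}
    (e : κ ⊕ ρ ≃ ι) (hWB : IsUnit ((fromCols W B).submatrix id e.symm)) :
    IsUnit ((fromCols W (-B)).submatrix id e.symm).det := by
  have : fromCols W (-B) = fromCols W B * (fromBlocks 1 0 0 (-1) : Matrix (κ ⊕ ρ) (κ ⊕ ρ) R) := by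
    simp [fromCols_mul_fromBlocks]
  rw [this, det_submatrix_mul]
  simpa [det_fromBlocks_zero₂₁, det_neg] using
    ((isUnit_iff_isUnit_det _).mp hWB).mul ((isUnit_neg_one (α := R)).pow _)

theorem Matrix.exists_mul_eq_zero_and_mul_eq_one [Fintype ι] [DecidableEq ι] [DecidableEq κ]
    [DecidableEq ρ] {W : Matrix ι κ R} {B : Matrix ι ρ R} (e : κ ⊕ ρ ≃ ι)
    (hWB : IsUnit ((fromCols W B).submatrix id e.symm)) :
    ∃ H : Matrix ρ ι R, H * W = 0 ∧ H * B = 1 := by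
  set N := (fromCols W B).submatrix id e.symm
  have hNe : N.submatrix (Equiv.refl ι) e = fromCols W B := by simp [N]
  have hG : N⁻¹.submatrix e (Equiv.refl ι) * fromCols W B = 1 := by
    rw [← hNe, submatrix_mul_equiv, nonsing_inv_mul _ ((isUnit_iff_isUnit_det _).mp hWB),
      submatrix_one_equiv]
  rw [← fromRows_toRows (N⁻¹.submatrix e _), fromRows_mul_fromCols, ← fromBlocks_one,
    fromBlocks_inj] at hG
  exact ⟨_, hG.2.2.1, hG.2.2.2⟩

theorem Matrix.rank_eq_card_of_mul_eq_one [Nontrivial R] [Fintype ι] [Fintype ρ] [DecidableEq ρ]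
    {H : Matrix ρ ι R} {B : Matrix ι ρ R} (hHB : H * B = 1) : H.rank = Fintype.card ρ :=
  le_antisymm H.rank_le_card_height (by simpa [hHB, rank_one] using rank_mul_le_left H B)

end BlockMatrices

section Controllability

variable {K ι ρ : Type*} [Field K] [IsAlgClosed K] [Fintype ι] [DecidableEq ι] [Fintype ρ]
  {A : Matrix ι ι K} {B : Matrix ι ρ K}

theorem Matrix.eq_top_of_hautus
    (hctrb : ∀ s : K, (fromCols (s • 1 - A) B).rank = Fintype.card ι)
    {Z : Submodule K (ι → K)} (hB : ∀ w, B *ᵥ w ∈ Z) (hA : ∀ x ∈ Z, A *ᵥ x ∈ Z) : Z = ⊤ := by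
  by_contra hZ
  have : Nontrivial ((ι → K) ⧸ Z) := Submodule.Quotient.nontrivial_iff.mpr hZ
  set Abar := Z.mapQ Z A.mulVecLin hA
  have hAbar (x : ι → K) : Abar (Submodule.Quotient.mk x) = Submodule.Quotient.mk (A *ᵥ x) := rfl
  obtain ⟨μ, hμ⟩ := Module.End.exists_eigenvalue Abar
  obtain ⟨v, hv⟩ := hμ.exists_hasEigenvector
  set g := μ • LinearMap.id - Abar
  have hg : g v = 0 := by simp [g, hv.apply_eq_smul]
  -- The Hautus matrix at `μ` is onto, and modulo `Z` its image is that of `μ - A`.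
  have hsurj : Function.Surjective g := by
    have hrange : LinearMap.range (fromCols (μ • 1 - A) B).mulVecLin = ⊤ :=
      Submodule.eq_top_of_finrank_eq (by simpa [Matrix.rank] using hctrb μ)
    intro q
    obtain ⟨y, rfl⟩ := Z.mkQ_surjective q
    obtain ⟨z, rfl⟩ : y ∈ LinearMap.range (fromCols (μ • 1 - A) B).mulVecLin := hrange ▸ trivial
    refine ⟨Z.mkQ (z ∘ Sum.inl), ?_⟩
    have hBz : Submodule.Quotient.mk (p := Z) (B *ᵥ (z ∘ Sum.inr)) = 0 :=
      (Submodule.Quotient.mk_eq_zero Z).mpr (hB _)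
    simp [g, hAbar, hBz, sub_mulVec, smul_mulVec]
  exact hv.2 (LinearMap.injective_iff_surjective.mpr hsurj (hg.trans (map_zero g).symm))

theorem Matrix.exists_notMem_sub_mulVec_mem
    (hctrb : ∀ s : K, (fromCols (s • 1 - A) B).rank = Fintype.card ι)
    {Z : Submodule K (ι → K)} (hZ : Z ≠ ⊤) (hB : ∀ w, B *ᵥ w ∈ Z)
    {a : K} (ha : (a • 1 - A).det ≠ 0) : ∃ x ∉ Z, (a • 1 - A) *ᵥ x ∈ Z := by
  by_contra! hpreimage
  have hunit : IsUnit (a • 1 - A) := (isUnit_iff_isUnit_det _).mpr ha.isUnit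
  let f : (ι → K) ≃ₗ[K] (ι → K) := LinearEquiv.ofBijective (a • 1 - A).mulVecLin
    ⟨mulVec_injective_iff_isUnit.mpr hunit, mulVec_surjective_iff_isUnit.mpr hunit⟩
  have hcomap : Z.comap (f : (ι → K) →ₗ[K] (ι → K)) = Z := by
    refine Submodule.eq_of_le_of_finrank_eq (fun x hx => by_contra fun h => hpreimage x h hx) ?_
    rw [Submodule.comap_equiv_eq_map_symm, LinearEquiv.finrank_map_eq]
  refine hZ (eq_top_of_hautus hctrb hB fun x hx => ?_)
  have hfx : (a • 1 - A) *ᵥ x ∈ Z := by rw [← hcomap] at hx; exact hx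
  have hAx : A *ᵥ x = a • x - (a • 1 - A) *ᵥ x := by simp [sub_mulVec, smul_mulVec]
  exact hAx ▸ Z.sub_mem (Z.smul_mem a hx) hfx

/-- `L` is the matrix, in the columns of `W`, of `A` compressed to their span along the range
of `B`. -/
theorem Matrix.exists_compression_charpoly_eq
    (hctrb : ∀ s : K, (fromCols (s • 1 - A) B).rank = Fintype.card ι)
    (hB : LinearIndependent K B.col) (s : Multiset K)
    (hs : Multiset.card s + Fintype.card ρ ≤ Fintype.card ι)
    (hdet : ∀ a ∈ s, (a • 1 - A).det ≠ 0) :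
    ∃ (κ : Type) (_ : Fintype κ) (_ : DecidableEq κ)
      (W : Matrix ι κ K) (U : Matrix ρ κ K) (L : Matrix κ κ K),
      Fintype.card κ = Multiset.card s ∧ LinearIndependent K (fromCols W B).col ∧
      A * W + B * U = W * L ∧ L.charpoly = (s.map fun a => X - C a).prod := by
  induction s using Multiset.induction_on with
  | empty =>
    refine ⟨Empty, inferInstance, inferInstance, 0, 0, 0, by simp, ?_, by simp, by simp⟩
    have hcol : (fromCols (0 : Matrix ι Empty K) B).col = B.col ∘ Equiv.emptySum Empty ρ := by
      ext (j | i)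
      · exact j.elim
      · rfl
    exact hcol ▸ hB.comp _ (Equiv.emptySum Empty ρ).injective
  | cons a s ih =>
    rw [Multiset.card_cons] at hs
    obtain ⟨κ, _, _, W, U, L, hcard, hli, hAWB, hL⟩ :=
      ih (by omega) fun b hb => hdet b (Multiset.mem_cons_of_mem hb)
    have hZ : LinearMap.range (fromCols W B).mulVecLin ≠ ⊤ := by
      intro h
      have := finrank_span_eq_card hli
      rw [← range_mulVecLin, h, finrank_top, Module.finrank_fintype_fun_eq_card,
        Fintype.card_sum] at this
      omega
    have hBZ : ∀ w, B *ᵥ w ∈ LinearMap.range (fromCols W B).mulVecLin :=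
      fun w => ⟨Sum.elim 0 w, by simp⟩
    obtain ⟨x, hxZ, v, hv⟩ :=
      exists_notMem_sub_mulVec_mem hctrb hZ hBZ (hdet a (Multiset.mem_cons_self a s))
    rw [range_mulVecLin] at hxZ
    refine ⟨κ ⊕ Unit, inferInstance, inferInstance, fromCols W (replicateCol Unit x),
      fromCols U (replicateCol Unit (v ∘ Sum.inr)),
      fromBlocks L (replicateCol Unit (-(v ∘ Sum.inl))) 0 (diagonal fun _ => a),
      by simp [hcard], linearIndependent_col_fromCols_replicateCol hli hxZ, ?_, ?_⟩
    · rw [mul_fromCols, mul_fromCols, fromCols_mul_fromBlocks]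
      ext i (j | ⟨⟩)
      · simpa using congrFun (congrFun hAWB i) j
      · have := congrFun hv i
        simp [← replicateCol_mulVec, sub_mulVec, smul_mulVec, mulVec_neg] at this ⊢
        linear_combination this
    · simp [hL, charpoly_diagonal, mul_comm]

end Controllability

/-- The Rosenbrock system matrix `P(s)` of `ẋ = A x + B u, y = H x`. -/
def Matrix.rosenbrockMatrix {R ι ρ : Type*} [CommRing R] [DecidableEq ι] (A : Matrix ι ι R)
    (B : Matrix ι ρ R) (H : Matrix ρ ι R) (s : R) : Matrix (ι ⊕ ρ) (ι ⊕ ρ) R :=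
  fromBlocks (s • 1 - A) (-B) H 0

theorem Matrix.det_rosenbrockMatrix_eq_eval_charpoly {R ι κ ρ : Type*} [CommRing R] [Fintype ι]
    [DecidableEq ι] [Fintype κ] [DecidableEq κ] [Fintype ρ] [DecidableEq ρ] {A : Matrix ι ι R}
    {B : Matrix ι ρ R} {H : Matrix ρ ι R} {W : Matrix ι κ R} {U : Matrix ρ κ R}
    {L : Matrix κ κ R} (e : κ ⊕ ρ ≃ ι) (hWB : IsUnit ((fromCols W B).submatrix id e.symm))
    (hAWB : A * W + B * U = W * L) (hHW : H * W = 0) (hHB : H * B = 1) (s : R) :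
    (rosenbrockMatrix A B H s).det = L.charpoly.eval s := by
  set N := (fromCols W (-B)).submatrix id e.symm
  set Q := fromBlocks ((fromCols W 0).submatrix id e.symm) B
    ((fromCols U 1).submatrix id e.symm) (1 : Matrix ρ ρ R)
  have hQ : Q.det = N.det := by
    have : (fromCols W 0).submatrix id e.symm - B * (fromCols U 1).submatrix id e.symm =
        submatrix (fromCols W (-B) * (fromBlocks 1 0 U 1 : Matrix (κ ⊕ ρ) (κ ⊕ ρ) R))
          id e.symm := by
      rw [mul_submatrix_id]
      show submatrix (fromCols W 0 - B * fromCols U 1) id e.symm = _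
      rw [fromCols_mul_fromBlocks]
      congr 1
      ext i (j | j) <;> simp [sub_eq_add_neg]
    rw [det_fromBlocks_one₂₂, this, det_submatrix_mul, det_fromBlocks_zero₁₂]
    simp [N]
  have hK : (s • 1 - A) * W - B * U = W * (scalar κ s - L) := by
    rw [Matrix.sub_mul, Matrix.mul_sub, ← hAWB, scalar_apply, ← smul_one_eq_diagonal]
    simp only [Matrix.smul_mul, Matrix.mul_smul, Matrix.one_mul, Matrix.mul_one]
    abel
  have hPQ : rosenbrockMatrix A B H s * Q = fromBlocks
      (submatrix (fromCols W (-B) * (fromBlocks (scalar κ s - L) 0 0 1 : Matrix (κ ⊕ ρ) (κ ⊕ ρ) R))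
        id e.symm)
      ((s • 1 - A) * B - B) 0 1 := by
    rw [rosenbrockMatrix, fromBlocks_multiply]
    congr 1
    · rw [mul_submatrix_id, mul_submatrix_id]
      show submatrix ((s • 1 - A) * fromCols W 0 + -B * fromCols U 1) id e.symm = _
      rw [mul_fromCols, mul_fromCols, fromCols_mul_fromBlocks, ← hK]
      congr 1
      ext i (j | j) <;> simp [sub_eq_add_neg]
    · simp [sub_eq_add_neg]
    · simp [mul_submatrix_id, hHW]
    · simp [hHB]
  have hdet : (rosenbrockMatrix A B H s).det * N.det = N.det * L.charpoly.eval s := by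
    rw [← hQ, ← det_mul, hPQ, det_fromBlocks_zero₂₁, det_submatrix_mul, det_fromBlocks_zero₂₁,
      eval_charpoly, hQ]
    simp [N]
  exact (isUnit_det_submatrix_fromCols_neg e hWB).mul_right_cancel (hdet.trans (mul_comm _ _))

theorem zero_assign_stmt17_general (n r : ℕ)
    (A : Matrix (Fin n) (Fin n) ℂ) (B : Matrix (Fin n) (Fin r) ℂ)
    (hB : B.rank = r)
    (hctrb : ∀ s : ℂ, (fromCols (s • (1 : Matrix (Fin n) (Fin n) ℂ) - A) B).rank = n)
    (ψ : Polynomial ℂ) (hmonic : ψ.Monic) (hdeg : ψ.natDegree = n - r)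
    (hroots : ∀ s : ℂ, ψ.IsRoot s → (s • (1 : Matrix (Fin n) (Fin n) ℂ) - A).det ≠ 0) :
    ∃ (H : Matrix (Fin r) (Fin n) ℂ) (c : ℂ), c ≠ 0 ∧ H.rank = r ∧
      ∀ s : ℂ, (fromBlocks (s • (1 : Matrix (Fin n) (Fin n) ℂ) - A) (-B) H 0).det =
        c * ψ.eval s := by
  have hrn : r ≤ n := by simpa [hB] using B.rank_le_card_height
  have hcard : ψ.roots.card = n - r := IsAlgClosed.card_roots_eq_natDegree.trans hdeg
  have hBcol : LinearIndependent ℂ B.col := linearIndependent_iff_card_eq_finrank_span.mpr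
    (by rw [Fintype.card_fin, Set.finrank, ← rank_eq_finrank_span_cols, hB])
  obtain ⟨κ, _, _, W, U, L, hκ, hli, hAWB, hL⟩ := exists_compression_charpoly_eq
    (by simpa using hctrb) hBcol ψ.roots (by simp [hcard]; omega)
    fun a ha => hroots a (mem_roots'.mp ha).2
  rw [prod_multiset_X_sub_C_of_monic_of_roots_card_eq hmonic
    IsAlgClosed.card_roots_eq_natDegree] at hL
  let e : κ ⊕ Fin r ≃ Fin n := Fintype.equivOfCardEq (by simp [hκ, hcard]; omega)
  have hWB : IsUnit ((fromCols W B).submatrix id e.symm) :=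
    linearIndependent_cols_iff_isUnit.mp (hli.comp _ e.symm.injective)
  obtain ⟨H, hHW, hHB⟩ := exists_mul_eq_zero_and_mul_eq_one e hWB
  refine ⟨H, 1, one_ne_zero, by simpa using rank_eq_card_of_mul_eq_one hHB, fun s => ?_⟩
  rw [one_mul, ← hL]
  exact det_rosenbrockMatrix_eq_eval_charpoly e hWB hAWB hHW hHB s

theorem zero_assign_stmt17 (n r : ℕ) (hrn : r < n)
    (A : Matrix (Fin n) (Fin n) ℂ) (B : Matrix (Fin n) (Fin r) ℂ)
    (hB : B.rank = r)
    (hctrb : ∀ s : ℂ, (fromCols (s • (1 : Matrix (Fin n) (Fin n) ℂ) - A) B).rank = n)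
    (ψ : Polynomial ℂ) (hmonic : ψ.Monic) (hdeg : ψ.natDegree = n - r)
    (hroots : ∀ s : ℂ, ψ.IsRoot s → (s • (1 : Matrix (Fin n) (Fin n) ℂ) - A).det ≠ 0) :
    ∃ (H : Matrix (Fin r) (Fin n) ℂ) (c : ℂ), c ≠ 0 ∧ H.rank = r ∧
      ∀ s : ℂ, (fromBlocks (s • (1 : Matrix (Fin n) (Fin n) ℂ) - A) (-B) H 0).det =
        c * ψ.eval s :=
  zero_assign_stmt17_general n r A B hB hctrb ψ hmonic hdeg hroots
end
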